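/- In the single-sequence energy-harvesting problem, the throughput maximizer exists, is unique, and is nondecreasing in time: the optimal power sequence P* satisfies P*¹ ≤ P*² ≤ … ≤ P*^{K+1}. In particular, whenever the optimal transmit power changes, it can only increase. -/
import Mathlib


/-- `g(x) = (1/2) log(1 + K₀ x)` (natural logarithm). -/
noncomputable def gfun (K0 x : ℝ) : ℝ := Real.log (1 + K0 * x) / 2

/-- Feasibility in the single-sequence energy-harvesting problem. -/
def SFeas (K : ℕ) (t E P : ℕ → ℝ) : Prop :=
  (∀ i, 1 ≤ i → i ≤ K + 1 → 0 ≤ P i) ∧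
  (∀ k, 1 ≤ k → k ≤ K + 1 →
    ∑ i ∈ Finset.Icc 1 k, P i * (t i - t (i - 1)) ≤ ∑ j ∈ Finset.range k, E j)

/-- The throughput `Σ_{i=1}^{K+1} lⁱ g(Pⁱ)`. -/
noncomputable def SThroughput (K0 : ℝ) (K : ℕ) (t P : ℕ → ℝ) : ℝ :=
  ∑ i ∈ Finset.Icc 1 (K + 1), (t i - t (i - 1)) * gfun K0 (P i)

lemma gfun_sc (K0 : ℝ) (hK0 : 0 < K0) : StrictConcaveOn ℝ (Set.Ici 0) (gfun K0) := by
  constructor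
  · exact convex_Ici 0
  · intro x hx y hy hxy a b ha hb hab
    simp only [Set.mem_Ici] at hx hy
    have h1 : (0:ℝ) < 1 + K0 * x := by nlinarith
    have h2 : (0:ℝ) < 1 + K0 * y := by nlinarith
    have hne : 1 + K0 * x ≠ 1 + K0 * y := by
      intro hc; apply hxy
      have : K0 * x = K0 * y := by linarith
      exact mul_left_cancel₀ (ne_of_gt hK0) this
    have key := strictConcaveOn_log_Ioi.2 (Set.mem_Ioi.2 h1) (Set.mem_Ioi.2 h2) hne ha hb hab
    simp only [smul_eq_mul] at key ⊢
    have e : a * (1 + K0 * x) + b * (1 + K0 * y) = 1 + K0 * (a * x + b * y) := by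
      linear_combination hab
    rw [e] at key
    simp only [gfun]
    linarith

lemma maximizer_mono (K0 : ℝ) (hK0 : 0 < K0) (K : ℕ) (t : ℕ → ℝ)
    (htmono : ∀ i, i ≤ K → t i < t (i + 1)) (E : ℕ → ℝ)
    (P : ℕ → ℝ) (hP : SFeas K t E P)
    (hmax : ∀ Q : ℕ → ℝ, SFeas K t E Q →
      SThroughput K0 K t Q ≤ SThroughput K0 K t P) :
    ∀ i j, 1 ≤ i → i ≤ j → j ≤ K + 1 → P i ≤ P j := by
  have hl : ∀ m, 1 ≤ m → m ≤ K + 1 → 0 < t m - t (m - 1) := by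
    intro m h1 h2
    have := htmono (m - 1) (by omega)
    have hm : m - 1 + 1 = m := by omega
    rw [hm] at this
    linarith
  intro i j hi hij hj
  by_contra hcon
  push_neg at hcon
  have hine : i ≠ j := by rintro rfl; exact absurd rfl (ne_of_gt hcon)
  have hiltj : i < j := lt_of_le_of_ne hij hine
  set l : ℕ → ℝ := fun m => t m - t (m - 1) with hldef
  have hli : 0 < l i := hl i hi (by omega)
  have hlj : 0 < l j := hl j (by omega) hj
  have hPi : 0 ≤ P i := hP.1 i hi (by omega)
  have hPj : 0 ≤ P j := hP.1 j (by omega) hj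
  set c : ℝ := (l i * P i + l j * P j) / (l i + l j) with hcdef
  have hlposs : 0 < l i + l j := by linarith
  have hc0 : 0 ≤ c := by positivity
  have hcmul : c * (l i + l j) = l i * P i + l j * P j := by
    rw [hcdef, div_mul_cancel₀ _ (ne_of_gt hlposs)]
  have hclt : c < P i := by
    rw [div_lt_iff₀ hlposs]
    nlinarith
  have hcgt : P j < c := by
    rw [lt_div_iff₀ hlposs] at *
    nlinarith
  set Q : ℕ → ℝ := Function.update (Function.update P i c) j c with hQdef
  have hQi : Q i = c := by
    simp [hQdef, Function.update_of_ne hine, Function.update_self]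
  have hQj : Q j = c := by simp [hQdef]
  have hQm : ∀ m, m ≠ i → m ≠ j → Q m = P m := by
    intro m h1 h2
    simp [hQdef, Function.update_of_ne h1, Function.update_of_ne h2]
  -- pointwise decomposition for weighted sums
  have point : ∀ (f : ℝ → ℝ) (m : ℕ),
      l m * f (Q m) = l m * f (P m)
        + ((if m = i then l i * (f c - f (P i)) else 0)
          + (if m = j then l j * (f c - f (P j)) else 0)) := by
    intro f m
    by_cases h1 : m = i
    · subst h1
      rw [hQi]
      simp [hine]
      ring
    · by_cases h2 : m = j
      · subst h2
        rw [hQj]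
        simp [h1]
        ring
      · rw [hQm m h1 h2]
        simp [h1, h2]
  have sumdec : ∀ (f : ℝ → ℝ) (s : Finset ℕ),
      ∑ m ∈ s, l m * f (Q m) = ∑ m ∈ s, l m * f (P m)
        + ((if i ∈ s then l i * (f c - f (P i)) else 0)
          + (if j ∈ s then l j * (f c - f (P j)) else 0)) := by
    intro f s
    rw [Finset.sum_congr rfl (fun m _ => point f m), Finset.sum_add_distrib,
      Finset.sum_add_distrib, Finset.sum_ite_eq' s i, Finset.sum_ite_eq' s j]
  -- feasibility of Q
  have hQfeas : SFeas K t E Q := by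
    constructor
    · intro m h1 h2
      by_cases hm1 : m = i
      · rw [hm1, hQi]; exact hc0
      · by_cases hm2 : m = j
        · rw [hm2, hQj]; exact hc0
        · rw [hQm m hm1 hm2]; exact hP.1 m h1 h2
    · intro k hk1 hk2
      have hPk := hP.2 k hk1 hk2
      have e1 : ∀ m, Q m * l m = l m * (fun x => x) (Q m) := by intro m; simp; ring
      have e2 : ∀ m, P m * l m = l m * (fun x => x) (P m) := by intro m; simp; ring
      calc ∑ m ∈ Finset.Icc 1 k, Q m * (t m - t (m - 1))
          = ∑ m ∈ Finset.Icc 1 k, l m * (fun x => x) (Q m) := by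
            apply Finset.sum_congr rfl; intro m _; simp [hldef]; ring
        _ = ∑ m ∈ Finset.Icc 1 k, l m * (fun x => x) (P m)
            + ((if i ∈ Finset.Icc 1 k then l i * (c - P i) else 0)
              + (if j ∈ Finset.Icc 1 k then l j * (c - P j) else 0)) := by
            rw [sumdec (fun x => x) (Finset.Icc 1 k)]
        _ ≤ ∑ m ∈ Finset.Icc 1 k, P m * (t m - t (m - 1)) := by
            have he : ∑ m ∈ Finset.Icc 1 k, l m * (fun x => x) (P m)
                = ∑ m ∈ Finset.Icc 1 k, P m * (t m - t (m - 1)) := by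
              apply Finset.sum_congr rfl; intro m _; simp [hldef]; ring
            rw [he]
            by_cases hik : i ≤ k
            · by_cases hjk : j ≤ k
              · rw [if_pos (Finset.mem_Icc.2 ⟨hi, hik⟩), if_pos (Finset.mem_Icc.2 ⟨by omega, hjk⟩)]
                nlinarith
              · rw [if_pos (Finset.mem_Icc.2 ⟨hi, hik⟩),
                  if_neg (fun hmem : j ∈ Finset.Icc 1 k => by rw [Finset.mem_Icc] at hmem; omega)]
                nlinarith
            · rw [if_neg (fun hmem : i ∈ Finset.Icc 1 k => by rw [Finset.mem_Icc] at hmem; omega),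
                if_neg (fun hmem : j ∈ Finset.Icc 1 k => by rw [Finset.mem_Icc] at hmem; omega)]
              simp
        _ ≤ ∑ j ∈ Finset.range k, E j := hPk
  -- throughput strictly increases
  have hmemi : i ∈ Finset.Icc 1 (K + 1) := Finset.mem_Icc.2 ⟨hi, by omega⟩
  have hmemj : j ∈ Finset.Icc 1 (K + 1) := Finset.mem_Icc.2 ⟨by omega, hj⟩
  have hTQ : SThroughput K0 K t Q = SThroughput K0 K t P
      + (l i * (gfun K0 c - gfun K0 (P i)) + l j * (gfun K0 c - gfun K0 (P j))) := by
    unfold SThroughput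
    rw [sumdec (gfun K0) (Finset.Icc 1 (K+1)), if_pos hmemi, if_pos hmemj]
  -- strict concavity step
  set a : ℝ := l i / (l i + l j) with hadef
  set b : ℝ := l j / (l i + l j) with hbdef
  have ha : 0 < a := by positivity
  have hb : 0 < b := by positivity
  have hab : a + b = 1 := by rw [hadef, hbdef]; field_simp
  have hcomb : a * P i + b * P j = c := by
    rw [hadef, hbdef, hcdef]; field_simp; try ring
  have hPne : P i ≠ P j := ne_of_gt hcon
  have key := (gfun_sc K0 hK0).2 (Set.mem_Ici.2 hPi) (Set.mem_Ici.2 hPj) hPne ha hb hab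
  simp only [smul_eq_mul] at key
  rw [hcomb] at key
  have ha' : (l i + l j) * a = l i := by rw [hadef]; field_simp
  have hb' : (l i + l j) * b = l j := by rw [hbdef]; field_simp
  have hstep : l i * gfun K0 (P i) + l j * gfun K0 (P j) < (l i + l j) * gfun K0 c := by
    calc l i * gfun K0 (P i) + l j * gfun K0 (P j)
        = (l i + l j) * (a * gfun K0 (P i) + b * gfun K0 (P j)) := by
          rw [mul_add, ← mul_assoc, ← mul_assoc, ha', hb']
      _ < (l i + l j) * gfun K0 c := by
          exact mul_lt_mul_of_pos_left key hlposs
  have : SThroughput K0 K t P < SThroughput K0 K t Q := by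
    rw [hTQ]; nlinarith
  exact absurd (hmax Q hQfeas) (not_le.2 this)

lemma maximizer_unique (K0 : ℝ) (hK0 : 0 < K0) (K : ℕ) (t : ℕ → ℝ)
    (htmono : ∀ i, i ≤ K → t i < t (i + 1)) (E : ℕ → ℝ)
    (P Q : ℕ → ℝ) (hP : SFeas K t E P)
    (hmaxP : ∀ R : ℕ → ℝ, SFeas K t E R →
      SThroughput K0 K t R ≤ SThroughput K0 K t P)
    (hQ : SFeas K t E Q)
    (hmaxQ : ∀ R : ℕ → ℝ, SFeas K t E R →
      SThroughput K0 K t R ≤ SThroughput K0 K t Q) :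
    ∀ i, 1 ≤ i → i ≤ K + 1 → Q i = P i := by
  have hl : ∀ m, 1 ≤ m → m ≤ K + 1 → 0 < t m - t (m - 1) := by
    intro m h1 h2
    have := htmono (m - 1) (by omega)
    have hm : m - 1 + 1 = m := by omega
    rw [hm] at this
    linarith
  by_contra hcon
  push_neg at hcon
  obtain ⟨i₀, hi₀1, hi₀2, hne₀⟩ := hcon
  set R : ℕ → ℝ := fun m => (P m + Q m) / 2 with hRdef
  have hRfeas : SFeas K t E R := by
    constructor
    · intro m h1 h2
      have := hP.1 m h1 h2
      have := hQ.1 m h1 h2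
      simp only [hRdef]
      linarith
    · intro k hk1 hk2
      have h1 := hP.2 k hk1 hk2
      have h2 := hQ.2 k hk1 hk2
      have he : ∑ m ∈ Finset.Icc 1 k, R m * (t m - t (m - 1))
          = (∑ m ∈ Finset.Icc 1 k, P m * (t m - t (m - 1))
            + ∑ m ∈ Finset.Icc 1 k, Q m * (t m - t (m - 1))) / 2 := by
        rw [← Finset.sum_add_distrib, Finset.sum_div]
        apply Finset.sum_congr rfl
        intro m _
        simp only [hRdef]
        ring
      rw [he]
      linarith
  have hTeq : SThroughput K0 K t P = SThroughput K0 K t Q :=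
    le_antisymm (hmaxQ P hP) (hmaxP Q hQ)
  have hTR : (SThroughput K0 K t P + SThroughput K0 K t Q) / 2 < SThroughput K0 K t R := by
    unfold SThroughput
    rw [← Finset.sum_add_distrib, Finset.sum_div]
    apply Finset.sum_lt_sum
    · intro m hm
      rw [Finset.mem_Icc] at hm
      have hlm : 0 < t m - t (m - 1) := hl m hm.1 hm.2
      have hPm : 0 ≤ P m := hP.1 m hm.1 hm.2
      have hQm : 0 ≤ Q m := hQ.1 m hm.1 hm.2
      by_cases heq : P m = Q m
      · have : R m = P m := by simp only [hRdef]; rw [heq]; ring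
        rw [this, heq]
        linarith
      · have key := (gfun_sc K0 hK0).2 (Set.mem_Ici.2 hPm) (Set.mem_Ici.2 hQm) heq
          (by norm_num : (0:ℝ) < 1/2) (by norm_num : (0:ℝ) < 1/2) (by norm_num)
        simp only [smul_eq_mul] at key
        have hc : (1:ℝ)/2 * P m + 1/2 * Q m = R m := by simp only [hRdef]; ring
        rw [hc] at key
        nlinarith
    · refine ⟨i₀, Finset.mem_Icc.2 ⟨hi₀1, hi₀2⟩, ?_⟩
      have hlm : 0 < t i₀ - t (i₀ - 1) := hl i₀ hi₀1 hi₀2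
      have hPm : 0 ≤ P i₀ := hP.1 i₀ hi₀1 hi₀2
      have hQm : 0 ≤ Q i₀ := hQ.1 i₀ hi₀1 hi₀2
      have key := (gfun_sc K0 hK0).2 (Set.mem_Ici.2 hPm) (Set.mem_Ici.2 hQm)
        (fun h => hne₀ h.symm)
        (by norm_num : (0:ℝ) < 1/2) (by norm_num : (0:ℝ) < 1/2) (by norm_num)
      simp only [smul_eq_mul] at key
      have hc : (1:ℝ)/2 * P i₀ + 1/2 * Q i₀ = R i₀ := by simp only [hRdef]; ring
      rw [hc] at key
      nlinarith
  have := hmaxP R hRfeas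
  rw [hTeq] at hTR
  have : SThroughput K0 K t Q < SThroughput K0 K t Q := by
    calc SThroughput K0 K t Q = (SThroughput K0 K t Q + SThroughput K0 K t Q) / 2 := by ring
      _ < SThroughput K0 K t R := hTR
      _ ≤ SThroughput K0 K t P := hmaxP R hRfeas
      _ = SThroughput K0 K t Q := hTeq
  exact absurd this (lt_irrefl _)

lemma maximizer_exists (K0 : ℝ) (hK0 : 0 < K0) (K : ℕ) (t : ℕ → ℝ)
    (htmono : ∀ i, i ≤ K → t i < t (i + 1)) (E : ℕ → ℝ)
    (hE0 : 0 < E 0) (hE : ∀ j, 1 ≤ j → j ≤ K → 0 ≤ E j) :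
    ∃ P : ℕ → ℝ, SFeas K t E P ∧ ∀ Q : ℕ → ℝ, SFeas K t E Q →
      SThroughput K0 K t Q ≤ SThroughput K0 K t P := by
  have hl : ∀ m, 1 ≤ m → m ≤ K + 1 → 0 < t m - t (m - 1) := by
    intro m h1 h2
    have := htmono (m - 1) (by omega)
    have hm : m - 1 + 1 = m := by omega
    rw [hm] at this
    linarith
  have hEnn : ∀ j, j ≤ K → 0 ≤ E j := by
    intro j hj
    rcases Nat.eq_zero_or_pos j with h | h
    · rw [h]; exact le_of_lt hE0
    · exact hE j h hj
  set B : ℝ := ∑ j ∈ Finset.range (K + 1), E j with hBdef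
  have hB0 : 0 ≤ B := Finset.sum_nonneg fun j hj =>
    hEnn j (by rw [Finset.mem_range] at hj; omega)
  have hpre : ∀ k, k ≤ K + 1 → ∑ j ∈ Finset.range k, E j ≤ B := by
    intro k hk
    apply Finset.sum_le_sum_of_subset_of_nonneg (Finset.range_subset_range.2 hk)
    intro j hj _
    exact hEnn j (by rw [Finset.mem_range] at hj; omega)
  set M : ℕ → ℝ := fun i => if 1 ≤ i ∧ i ≤ K + 1 then B / (t i - t (i - 1)) else 0
    with hMdef
  have hM0 : ∀ i, 0 ≤ M i := by
    intro i
    simp only [hMdef]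
    split
    · next h => exact div_nonneg hB0 (le_of_lt (hl i h.1 h.2))
    · exact le_refl 0
  set A : Set (ℕ → ℝ) := Set.univ.pi fun i => Set.Icc 0 (M i) with hAdef
  set D : Set (ℕ → ℝ) := {P | ∀ k ∈ Finset.Icc 1 (K + 1),
    ∑ i ∈ Finset.Icc 1 k, P i * (t i - t (i - 1)) ≤ ∑ j ∈ Finset.range k, E j} with hDdef
  set C : Set (ℕ → ℝ) := A ∩ D with hCdef
  have hAcomp : IsCompact A := isCompact_univ_pi fun i => isCompact_Icc
  have hDclosed : IsClosed D := by
    have : D = ⋂ k ∈ Finset.Icc 1 (K + 1), {P : ℕ → ℝ |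
        ∑ i ∈ Finset.Icc 1 k, P i * (t i - t (i - 1)) ≤ ∑ j ∈ Finset.range k, E j} := by
      ext P
      simp [hDdef, Set.mem_iInter]
    rw [this]
    refine isClosed_biInter fun k _ => ?_
    exact isClosed_le (continuous_finset_sum _ fun i _ =>
      (continuous_apply i).mul continuous_const) continuous_const
  have hCcomp : IsCompact C := hAcomp.inter_right hDclosed
  have hCmemFeas : ∀ P ∈ C, SFeas K t E P := by
    rintro P ⟨hPA, hPD⟩
    constructor
    · intro i _ _
      exact (hPA i (Set.mem_univ i)).1
    · intro k hk1 hk2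
      exact hPD k (Finset.mem_Icc.2 ⟨hk1, hk2⟩)
  have hCne : C.Nonempty := by
    refine ⟨fun _ => 0, ?_, ?_⟩
    · intro i _
      exact ⟨le_refl 0, hM0 i⟩
    · intro k hk
      rw [Finset.mem_Icc] at hk
      simp only [Set.mem_setOf_eq, zero_mul, Finset.sum_const_zero]
      exact Finset.sum_nonneg fun j hj =>
        hEnn j (by rw [Finset.mem_range] at hj; omega)
  have hTcont : ContinuousOn (SThroughput K0 K t) C := by
    intro P hP
    apply ContinuousAt.continuousWithinAt
    have : ∀ i ∈ Finset.Icc 1 (K + 1),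
        ContinuousAt (fun Q : ℕ → ℝ => (t i - t (i - 1)) * gfun K0 (Q i)) P := by
      intro i _
      have hPi : 0 ≤ P i := (hP.1 i (Set.mem_univ i)).1
      have hne : 1 + K0 * P i ≠ 0 := by nlinarith
      have hf : ContinuousAt (fun x : ℝ => 1 + K0 * x) (P i) := by fun_prop
      have h1 : ContinuousAt (gfun K0) (P i) := by
        unfold gfun
        exact (ContinuousAt.comp (f := fun x : ℝ => 1 + K0 * x) (Real.continuousAt_log hne) hf).div_const 2
      have h2 : ContinuousAt (fun Q : ℕ → ℝ => gfun K0 (Q i)) P := by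
        show ContinuousAt ((gfun K0) ∘ fun Q : ℕ → ℝ => Q i) P
        exact ContinuousAt.comp (f := fun Q : ℕ → ℝ => Q i) h1 (continuous_apply i).continuousAt
      exact h2.const_mul _
    unfold SThroughput
    exact tendsto_finset_sum _ this
  obtain ⟨v, hvC, hvmax⟩ := hCcomp.exists_isMaxOn hCne hTcont
  rw [isMaxOn_iff] at hvmax
  refine ⟨v, hCmemFeas v hvC, ?_⟩
  intro Q hQ
  set Q' : ℕ → ℝ := fun i => if 1 ≤ i ∧ i ≤ K + 1 then Q i else 0 with hQ'def
  have hQ'eq : ∀ i, 1 ≤ i → i ≤ K + 1 → Q' i = Q i := by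
    intro i h1 h2
    simp only [hQ'def]
    rw [if_pos ⟨h1, h2⟩]
  have hQ'C : Q' ∈ C := by
    constructor
    · intro i _
      simp only [hQ'def, hMdef]
      by_cases h : 1 ≤ i ∧ i ≤ K + 1
      · rw [if_pos h, if_pos h]
        refine ⟨hQ.1 i h.1 h.2, ?_⟩
        have hli : 0 < t i - t (i - 1) := hl i h.1 h.2
        rw [le_div_iff₀ hli]
        have hsingle : Q i * (t i - t (i - 1))
            ≤ ∑ m ∈ Finset.Icc 1 i, Q m * (t m - t (m - 1)) := by
          apply Finset.single_le_sum (f := fun m => Q m * (t m - t (m - 1)))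
          · intro m hm
            rw [Finset.mem_Icc] at hm
            exact mul_nonneg (hQ.1 m hm.1 (by omega)) (le_of_lt (hl m hm.1 (by omega)))
          · exact Finset.mem_Icc.2 ⟨h.1, le_refl i⟩
        calc Q i * (t i - t (i - 1))
            ≤ ∑ m ∈ Finset.Icc 1 i, Q m * (t m - t (m - 1)) := hsingle
          _ ≤ ∑ j ∈ Finset.range i, E j := hQ.2 i h.1 h.2
          _ ≤ B := hpre i h.2
      · rw [if_neg h, if_neg h]
        exact ⟨le_refl 0, le_refl 0⟩
    · intro k hk
      rw [Finset.mem_Icc] at hk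
      have he : ∑ m ∈ Finset.Icc 1 k, Q' m * (t m - t (m - 1))
          = ∑ m ∈ Finset.Icc 1 k, Q m * (t m - t (m - 1)) := by
        apply Finset.sum_congr rfl
        intro m hm
        rw [Finset.mem_Icc] at hm
        rw [hQ'eq m hm.1 (by omega)]
      show ∑ m ∈ Finset.Icc 1 k, Q' m * (t m - t (m - 1)) ≤ ∑ j ∈ Finset.range k, E j
      rw [he]
      exact hQ.2 k hk.1 hk.2
  have hTeq : SThroughput K0 K t Q = SThroughput K0 K t Q' := by
    unfold SThroughput
    apply Finset.sum_congr rfl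
    intro m hm
    rw [Finset.mem_Icc] at hm
    rw [hQ'eq m hm.1 hm.2]
  rw [hTeq]
  exact hvmax Q' hQ'C

/-- Lemma 2 of the paper, specialized to the single-sequence problem: the
throughput maximizer exists, is unique (on the relevant epochs `1, …, K+1`),
and its powers are nondecreasing in time, so whenever the optimal transmit
power changes it can only increase. -/
theorem optimal_power_monotone_unique (K0 : ℝ) (hK0 : 0 < K0)
    (K : ℕ) (t : ℕ → ℝ) (ht0 : t 0 = 0) (htmono : ∀ i, i ≤ K → t i < t (i + 1))
    (E : ℕ → ℝ) (hE0 : 0 < E 0) (hE : ∀ j, 1 ≤ j → j ≤ K → 0 ≤ E j) :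
    ∃ Pstar : ℕ → ℝ,
      (SFeas K t E Pstar ∧
        ∀ Q : ℕ → ℝ, SFeas K t E Q →
          SThroughput K0 K t Q ≤ SThroughput K0 K t Pstar) ∧
      (∀ i j, 1 ≤ i → i ≤ j → j ≤ K + 1 → Pstar i ≤ Pstar j) ∧
      (∀ Q : ℕ → ℝ,
        (SFeas K t E Q ∧
          ∀ R : ℕ → ℝ, SFeas K t E R →
            SThroughput K0 K t R ≤ SThroughput K0 K t Q) →
        ∀ i, 1 ≤ i → i ≤ K + 1 → Q i = Pstar i) := by
  obtain ⟨Pstar, hPfeas, hPmax⟩ :=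
    maximizer_exists K0 hK0 K t htmono E hE0 hE
  refine ⟨Pstar, ⟨hPfeas, hPmax⟩, ?_, ?_⟩
  · exact maximizer_mono K0 hK0 K t htmono E Pstar hPfeas hPmax
  · rintro Q ⟨hQfeas, hQmax⟩ i h1 h2
    exact maximizer_unique K0 hK0 K t htmono E Pstar Q hPfeas hPmax hQfeas hQmax i h1 h2
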